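/- Let (γ,ε,ξ) ∈ Z²(l, a, ω_a)_♯ be a balanced cocycle with l abelian and a a Lie algebra. The symplectic Lie algebra d := d_{γ,ε,ξ}(l,a) is nilpotent if and only if a is nilpotent and there exists n ∈ ℕ such that ξ(L₁)∘⋯∘ξ(Lₙ) = 0 for all L₁,…,Lₙ ∈ l. -/

import Mathlib

namespace Stmt16

variable {l a : Type*} [AddCommGroup l] [Module ℝ l] [LieRing a] [LieAlgebra ℝ a]

/-- The underlying vector space `l* ⊕ a ⊕ l` of the standard model. -/
abbrev Dm (l a : Type*) [AddCommGroup l] [Module ℝ l] [AddCommGroup a] [Module ℝ a] :=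
  (Module.Dual ℝ l) × a × l

/-- `β(A₁, A₂) = L ↦ −ω_a(ξ(L)A₁, A₂) − ω_a(A₁, ξ(L)A₂)` as an element of `l*`. -/
def betaF (ωa : a →ₗ[ℝ] a →ₗ[ℝ] ℝ) (ξ : l →ₗ[ℝ] (a →ₗ[ℝ] a)) (A₁ A₂ : a) :
    Module.Dual ℝ l :=
  - ((ωa.flip A₂) ∘ₗ (ξ.flip A₁)) - ((ωa A₁) ∘ₗ (ξ.flip A₂))

/-- The bracket of the standard model `d_{γ,ε,ξ}(l,a)` on `l* ⊕ a ⊕ l`. -/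
def br (ωa : a →ₗ[ℝ] a →ₗ[ℝ] ℝ) (γ : l →ₗ[ℝ] (a →ₗ[ℝ] Module.Dual ℝ l))
    (ε : l →ₗ[ℝ] (l →ₗ[ℝ] Module.Dual ℝ l)) (ξ : l →ₗ[ℝ] (a →ₗ[ℝ] a))
    (αf : l → l → a) : Dm l a → Dm l a → Dm l a :=
  fun x y =>
    (betaF ωa ξ x.2.1 y.2.1 + γ x.2.2 y.2.1 - γ y.2.2 x.2.1 + ε x.2.2 y.2.2,
     ⁅x.2.1, y.2.1⁆ + ξ x.2.2 y.2.1 - ξ y.2.2 x.2.1 + αf x.2.2 y.2.2,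
     0)

/-- The symplectic form of the standard model. -/
def Om (ωa : a →ₗ[ℝ] a →ₗ[ℝ] ℝ) : Dm l a → Dm l a → ℝ :=
  fun x y => x.1 y.2.2 + ωa x.2.1 y.2.1 - y.1 x.2.2

/-- The five conditions defining the set `Z²(l, a, ω_a)` of quadratic cocycles
(with `αf` the `ω_a`-dual datum `α` of `γ`). -/
def IsQuadCocycle (ωa : a →ₗ[ℝ] a →ₗ[ℝ] ℝ) (γ : l →ₗ[ℝ] (a →ₗ[ℝ] Module.Dual ℝ l))
    (ε : l →ₗ[ℝ] (l →ₗ[ℝ] Module.Dual ℝ l)) (ξ : l →ₗ[ℝ] (a →ₗ[ℝ] a))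
    (αf : l → l → a) : Prop :=
  -- (1) (ξ, α) is a factor system :
  ((∀ (L : l) (X Y : a), ξ L ⁅X, Y⁆ = ⁅ξ L X, Y⁆ + ⁅X, ξ L Y⁆) ∧
    (∀ (L₁ L₂ : l) (A : a), ξ L₁ (ξ L₂ A) - ξ L₂ (ξ L₁ A) = ⁅αf L₁ L₂, A⁆) ∧
    (∀ L₁ L₂ L₃ : l, ξ L₁ (αf L₂ L₃) - ξ L₂ (αf L₁ L₃) + ξ L₃ (αf L₁ L₂) = 0)) ∧
  -- (2) :
  (∀ (L : l) (A₁ A₂ : a),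
      betaF ωa ξ (ξ L A₁) A₂ + betaF ωa ξ A₁ (ξ L A₂) = γ L ⁅A₁, A₂⁆) ∧
  -- (3) d_{ξ̂}γ + β₀ ∘ α = 0 :
  (∀ (L₁ L₂ : l) (A : a),
      γ L₂ (ξ L₁ A) - γ L₁ (ξ L₂ A) + betaF ωa ξ (αf L₁ L₂) A = 0) ∧
  -- (4) ev(γ ∧ α) = 0 :
  (∀ L₁ L₂ L₃ : l,
      γ L₁ (αf L₂ L₃) - γ L₂ (αf L₁ L₃) + γ L₃ (αf L₁ L₂) = 0) ∧
  -- (5) :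
  (∀ L₁ L₂ L₃ : l, ε L₁ L₂ L₃ + ε L₂ L₃ L₁ + ε L₃ L₁ L₂ = 0)

/-- The center of the standard model, as a predicate. -/
def InCenter (ωa : a →ₗ[ℝ] a →ₗ[ℝ] ℝ) (γ : l →ₗ[ℝ] (a →ₗ[ℝ] Module.Dual ℝ l))
    (ε : l →ₗ[ℝ] (l →ₗ[ℝ] Module.Dual ℝ l)) (ξ : l →ₗ[ℝ] (a →ₗ[ℝ] a))
    (αf : l → l → a) (x : Dm l a) : Prop :=
  ∀ y : Dm l a, br ωa γ ε ξ αf x y = 0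

/-- Iterated right-nested brackets in the standard model. -/
def nestD (brf : Dm l a → Dm l a → Dm l a) : ℕ → (ℕ → Dm l a) → Dm l a
  | 0, x => x 0
  | (k + 1), x => brf (x (k + 1)) (nestD brf k x)

/-- Iterated compositions `ξ(L₁)∘⋯∘ξ(Lₙ)` applied to `A`. -/
def compXi (ξ : l →ₗ[ℝ] (a →ₗ[ℝ] a)) : ℕ → (ℕ → l) → a → a
  | 0, _, A => A
  | (k + 1), L, A => ξ (L k) (compXi ξ k L A)


/-! ### Auxiliary machinery -/

/-- Prepend an element to a sequence. -/
def cns {α : Type*} (x : α) (L : ℕ → α) : ℕ → α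
  | 0 => x
  | (s + 1) => L s

section CompXiLemmas

variable (ξ : l →ₗ[ℝ] (a →ₗ[ℝ] a))

lemma compXi_zero_right : ∀ (n : ℕ) (L : ℕ → l), compXi ξ n L 0 = 0
  | 0, _ => rfl
  | (n+1), L => by rw [compXi, compXi_zero_right n L, map_zero]

lemma compXi_add_right : ∀ (n : ℕ) (L : ℕ → l) (A B : a),
    compXi ξ n L (A + B) = compXi ξ n L A + compXi ξ n L B
  | 0, _, _, _ => rfl
  | (n+1), L, A, B => by rw [compXi, compXi_add_right n, map_add, compXi, compXi]

lemma compXi_smul_right : ∀ (n : ℕ) (L : ℕ → l) (c : ℝ) (A : a),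
    compXi ξ n L (c • A) = c • compXi ξ n L A
  | 0, _, _, _ => rfl
  | (n+1), L, c, A => by rw [compXi, compXi_smul_right n, map_smul, compXi]

lemma compXi_comp : ∀ (p q : ℕ) (L : ℕ → l) (A : a),
    compXi ξ (q + p) L A = compXi ξ p (fun t => L (t + q)) (compXi ξ q L A)
  | 0, q, L, A => rfl
  | (p+1), q, L, A => by
      show ξ (L (q + p)) (compXi ξ (q + p) L A) = ξ (L (p + q)) _
      rw [compXi_comp p q L A, Nat.add_comm q p]

lemma compXi_cns : ∀ (j : ℕ) (x : l) (L : ℕ → l) (B : a),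
    compXi ξ (j + 1) (cns x L) B = compXi ξ j L (ξ x B)
  | 0, x, L, B => rfl
  | (j+1), x, L, B => by
      show ξ (L j) (compXi ξ (j + 1) (cns x L) B) = _
      rw [compXi_cns j, compXi]

/-- If all length-`n` compositions of adjoint maps vanish, the lower central
series of `a` reaches `⊥` at step `n`. -/
lemma lcs_eq_bot_of_ad_comp (ξad : a →ₗ[ℝ] (a →ₗ[ℝ] a))
    (had : ∀ x y : a, ξad x y = ⁅x, y⁆) (n : ℕ)
    (H : ∀ (A : ℕ → a) (B : a), compXi ξad n A B = 0) :
    LieModule.lowerCentralSeries ℝ a a n = ⊥ := by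
  have Hlong : ∀ (j : ℕ), n ≤ j → ∀ (A : ℕ → a) (B : a),
      compXi ξad j A B = 0 := by
    intro j hj A B
    obtain ⟨p, rfl⟩ := Nat.exists_eq_add_of_le hj
    rw [compXi_comp, H, compXi_zero_right]
  have claim : ∀ (k : ℕ) (B : a), B ∈ LieModule.lowerCentralSeries ℝ a a k →
      ∀ (A : ℕ → a) (j : ℕ), n ≤ j + k → compXi ξad j A B = 0 := by
    intro k
    induction k with
    | zero => intro B _ A j hj; exact Hlong j (by omega) A B
    | succ k ih =>
      intro B hB A j hj
      rw [LieModule.lowerCentralSeries_succ] at hB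
      rw [← LieSubmodule.mem_toSubmodule,
        LieSubmodule.lieIdeal_oper_eq_linear_span'] at hB
      refine Submodule.span_induction ?_ ?_ ?_ ?_ hB
      · rintro m ⟨x, -, c, hc, rfl⟩
        rw [← had, ← compXi_cns]
        exact ih c hc (cns x A) (j + 1) (by omega)
      · exact compXi_zero_right _ j A
      · intro u v _ _ hu hv
        rw [compXi_add_right, hu, hv, add_zero]
      · intro c u _ hu
        rw [compXi_smul_right, hu, smul_zero]
  rw [eq_bot_iff]
  intro B hB
  have := claim n B hB (fun _ => 0) 0 (by omega)
  simpa [compXi] using this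

/-- The lower central series is invariant under a family of derivations. -/
lemma xi_lcs (hder : ∀ (L : l) (X Y : a), ξ L ⁅X, Y⁆ = ⁅ξ L X, Y⁆ + ⁅X, ξ L Y⁆) :
    ∀ (k : ℕ) (B : a), B ∈ LieModule.lowerCentralSeries ℝ a a k → ∀ L : l,
      ξ L B ∈ LieModule.lowerCentralSeries ℝ a a k := by
  intro k
  induction k with
  | zero => intro B _ L; simp
  | succ k ih =>
    intro B hB L
    rw [LieModule.lowerCentralSeries_succ] at hB ⊢
    rw [← LieSubmodule.mem_toSubmodule,
      LieSubmodule.lieIdeal_oper_eq_linear_span'] at hB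
    have : ∀ L : l, ξ L B ∈ ⁅(⊤ : LieIdeal ℝ a), LieModule.lowerCentralSeries ℝ a a k⁆ := by
      refine Submodule.span_induction ?_ ?_ ?_ ?_ hB
      · rintro m ⟨x, -, c, hc, rfl⟩ L
        rw [hder]
        exact add_mem (LieSubmodule.lie_mem_lie (LieSubmodule.mem_top _) hc)
          (LieSubmodule.lie_mem_lie (LieSubmodule.mem_top _) (ih c hc L))
      · intro L; simp
      · intro u v _ _ hu hv L; rw [map_add]; exact add_mem (hu L) (hv L)
      · intro c u _ hu L; rw [map_smul]; exact Submodule.smul_mem _ _ (hu L)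
    exact this L

/-- Iterated application of the operators `B ↦ ⁅A k, B⁆ + ξ (L k) B`. -/
def Dch (A : ℕ → a) (L : ℕ → l) : ℕ → a → a
  | 0, B => B
  | (k + 1), B => ⁅A k, Dch A L k B⁆ + ξ (L k) (Dch A L k B)

lemma Dch_comp : ∀ (p q : ℕ) (A : ℕ → a) (L : ℕ → l) (B : a),
    Dch ξ A L (q + p) B =
      Dch ξ (fun t => A (t + q)) (fun t => L (t + q)) p (Dch ξ A L q B)
  | 0, q, A, L, B => rfl
  | (p+1), q, A, L, B => by
      show ⁅A (q + p), Dch ξ A L (q + p) B⁆ + ξ (L (q + p)) (Dch ξ A L (q + p) B) = _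
      rw [Dch_comp p q A L B]
      show _ = ⁅A (p + q), _⁆ + ξ (L (p + q)) _
      rw [Nat.add_comm q p]

lemma Dch_zeroA : ∀ (k : ℕ) (L : ℕ → l) (B : a),
    Dch ξ (fun _ => (0 : a)) L k B = compXi ξ k L B
  | 0, _, _ => rfl
  | (k+1), L, B => by
      show ⁅(0 : a), _⁆ + ξ (L k) (Dch ξ (fun _ => (0 : a)) L k B) = _
      rw [zero_lie, zero_add, Dch_zeroA k, compXi]

lemma Dch_zeroL (ξad : a →ₗ[ℝ] (a →ₗ[ℝ] a)) (had : ∀ x y : a, ξad x y = ⁅x, y⁆) :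
    ∀ (k : ℕ) (A : ℕ → a) (B : a),
    Dch ξ A (fun _ => (0 : l)) k B = compXi ξad k A B
  | 0, _, _ => rfl
  | (k+1), A, B => by
      show ⁅A k, Dch ξ A (fun _ => (0 : l)) k B⁆ + ξ 0 (Dch ξ A (fun _ => (0 : l)) k B) = _
      rw [map_zero, LinearMap.zero_apply, add_zero, Dch_zeroL ξad had k, compXi, had]

lemma Dch_step
    (hder : ∀ (L : l) (X Y : a), ξ L ⁅X, Y⁆ = ⁅ξ L X, Y⁆ + ⁅X, ξ L Y⁆) :
    ∀ (p : ℕ) (A : ℕ → a) (L : ℕ → l) (B : a) (j : ℕ),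
      B ∈ LieModule.lowerCentralSeries ℝ a a j →
      Dch ξ A L p B ∈ LieModule.lowerCentralSeries ℝ a a j ∧
      Dch ξ A L p B - compXi ξ p L B ∈ LieModule.lowerCentralSeries ℝ a a (j + 1) := by
  intro p
  induction p with
  | zero =>
    intro A L B j hB
    exact ⟨hB, by simp [Dch, compXi]⟩
  | succ p ih =>
    intro A L B j hB
    obtain ⟨hC, hd⟩ := ih A L B j hB
    set C := Dch ξ A L p B with hCdef
    have hlie : ⁅A p, C⁆ ∈ LieModule.lowerCentralSeries ℝ a a (j + 1) := by
      rw [LieModule.lowerCentralSeries_succ]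
      exact LieSubmodule.lie_mem_lie (LieSubmodule.mem_top _) hC
    constructor
    · exact add_mem
        ((LieModule.antitone_lowerCentralSeries ℝ a a (Nat.le_succ j)) hlie)
        (xi_lcs ξ hder j C hC (L p))
    · have : Dch ξ A L (p + 1) B - compXi ξ (p + 1) L B
          = ⁅A p, C⁆ + ξ (L p) (C - compXi ξ p L B) := by
        show ⁅A p, C⁆ + ξ (L p) C - ξ (L p) (compXi ξ p L B) = _
        rw [map_sub]; abel
      rw [this]
      exact add_mem hlie (xi_lcs ξ hder (j + 1) _ hd (L p))

lemma Dch_eq_zero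
    (hder : ∀ (L : l) (X Y : a), ξ L ⁅X, Y⁆ = ⁅ξ L X, Y⁆ + ⁅X, ξ L Y⁆)
    (m n : ℕ) (hm : LieModule.lowerCentralSeries ℝ a a m = ⊥)
    (hn : ∀ (L : ℕ → l) (A : a), compXi ξ n L A = 0) :
    ∀ (A : ℕ → a) (L : ℕ → l) (B : a), Dch ξ A L (m * n) B = 0 := by
  have claim : ∀ (i : ℕ) (A : ℕ → a) (L : ℕ → l) (B : a),
      Dch ξ A L (i * n) B ∈ LieModule.lowerCentralSeries ℝ a a i := by
    intro i
    induction i with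
    | zero => intro A L B; simp
    | succ i ih =>
      intro A L B
      have hrw : (i + 1) * n = i * n + n := by ring
      rw [hrw, Dch_comp]
      have h2 := (Dch_step ξ hder n (fun t => A (t + i * n)) (fun t => L (t + i * n))
        (Dch ξ A L (i * n) B) i (ih A L B)).2
      rwa [hn, sub_zero] at h2
  intro A L B
  have := claim m A L B
  rw [hm] at this
  simpa using this

lemma betaF_zero_left (ωa : a →ₗ[ℝ] a →ₗ[ℝ] ℝ) (ξ : l →ₗ[ℝ] (a →ₗ[ℝ] a)) (B : a) :
    betaF ωa ξ 0 B = 0 := by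
  unfold betaF
  ext L
  simp

lemma betaF_zero_right (ωa : a →ₗ[ℝ] a →ₗ[ℝ] ℝ) (ξ : l →ₗ[ℝ] (a →ₗ[ℝ] a)) (B : a) :
    betaF ωa ξ B 0 = 0 := by
  unfold betaF
  ext L
  simp

end CompXiLemmas

/-- for a balanced cocycle, the standard model `d_{γ,ε,ξ}(l,a)` is
nilpotent iff `a` is nilpotent and some iterated composition length of `ξ` vanishes. -/
theorem standard_model_nilpotent_iff
    [FiniteDimensional ℝ l] [FiniteDimensional ℝ a]
    (ωa : a →ₗ[ℝ] a →ₗ[ℝ] ℝ)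
    (hskew : ∀ X Y : a, ωa X Y = - ωa Y X)
    (hnd : ∀ X : a, (∀ Y : a, ωa X Y = 0) → X = 0)
    (hclosed : ∀ X Y Z : a, ωa ⁅X, Y⁆ Z - ωa ⁅X, Z⁆ Y + ωa ⁅Y, Z⁆ X = 0)
    (γ : l →ₗ[ℝ] (a →ₗ[ℝ] Module.Dual ℝ l))
    (ε : l →ₗ[ℝ] (l →ₗ[ℝ] Module.Dual ℝ l)) (hε : ∀ L : l, ε L L = 0)
    (ξ : l →ₗ[ℝ] (a →ₗ[ℝ] a))
    (αf : l → l → a)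
    (hα : ∀ (L₁ L₂ : l) (A : a), γ L₁ A L₂ - γ L₂ A L₁ = ωa (αf L₁ L₂) A)
    (hcoc : IsQuadCocycle ωa γ ε ξ αf)
    -- the cocycle is balanced : condition (a)
    (hbalA : ∀ L : l,
      (∃ A : a,
        (∀ B : a, ⁅A, B⁆ + ξ L B = 0) ∧
        (∀ B : a, γ L B + betaF ωa ξ A B = 0) ∧
        (∀ L' : l, αf L L' = ξ L' A) ∧
        (∀ L' : l, ε L L' = γ L' A)) → L = 0)
    -- and condition (b)
    (hbalB : ∀ A : a,
      ((∀ B : a, ⁅A, B⁆ = 0) ∧ (∀ B : a, betaF ωa ξ A B = 0) ∧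
        (∀ L : l, ξ L A = 0) ∧ (∀ L : l, γ L A = 0)) →
      (∀ B : a,
        ((∀ B' : a, ⁅B, B'⁆ = 0) ∧ (∀ B' : a, betaF ωa ξ B B' = 0) ∧
          (∀ L : l, ξ L B = 0) ∧ (∀ L : l, γ L B = 0)) → ωa A B = 0) → A = 0) :
    -- d_{γ,ε,ξ} is nilpotent
    (∃ n : ℕ, ∀ x : ℕ → Dm l a, nestD (br ωa γ ε ξ αf) n x = 0)
    ↔ (LieModule.IsNilpotent a a ∧
        ∃ n : ℕ, ∀ (L : ℕ → l) (A : a), compXi ξ n L A = 0) := by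
  classical
  have hder : ∀ (L : l) (X Y : a), ξ L ⁅X, Y⁆ = ⁅ξ L X, Y⁆ + ⁅X, ξ L Y⁆ := hcoc.1.1
  -- α vanishes when its second argument is zero
  have hα0 : ∀ L : l, αf L 0 = 0 := by
    intro L
    apply hnd
    intro A
    have h := (hα L 0 A).symm
    simpa using h
  -- bracket against an element with vanishing `l`-component
  have hbr : ∀ x y : Dm l a, y.2.2 = 0 →
      br ωa γ ε ξ αf x y =
        (betaF ωa ξ x.2.1 y.2.1 + γ x.2.2 y.2.1,
          ⁅x.2.1, y.2.1⁆ + ξ x.2.2 y.2.1, 0) := by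
    intro x y hy
    unfold br
    rw [hy]
    simp [hα0]
  have hbr0 : ∀ u : Dm l a, br ωa γ ε ξ αf u 0 = 0 := by
    intro u
    rw [hbr u 0 rfl]
    simp [betaF_zero_right, Prod.ext_iff]
  -- the second and third components of iterated brackets follow a `Dch`-chain
  have claimB : ∀ (x : ℕ → Dm l a) (k : ℕ),
      (nestD (br ωa γ ε ξ αf) (k + 1) x).2 =
        (Dch ξ (fun t => (x (t + 2)).2.1) (fun t => (x (t + 2)).2.2) k
          ((nestD (br ωa γ ε ξ αf) 1 x).2.1), 0) := by
    intro x k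
    induction k with
    | zero =>
      show (br ωa γ ε ξ αf (x 1) (x 0)).2 = _
      rfl
    | succ k ih =>
      have h3 : (nestD (br ωa γ ε ξ αf) (k + 1) x).2.2 = 0 := by rw [ih]
      have h2 : (nestD (br ωa γ ε ξ αf) (k + 1) x).2.1
          = Dch ξ (fun t => (x (t + 2)).2.1) (fun t => (x (t + 2)).2.2) k
            ((nestD (br ωa γ ε ξ αf) 1 x).2.1) := by rw [ih]
      show (br ωa γ ε ξ αf (x (k + 2)) (nestD (br ωa γ ε ξ αf) (k + 1) x)).2 = _
      rw [hbr _ _ h3]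
      show (⁅(x (k + 2)).2.1, _⁆ + ξ ((x (k + 2)).2.2) _, (0 : l)) = _
      rw [h2]
      rfl
  constructor
  · -- forward direction
    rintro ⟨n, hn⟩
    -- we may replace `n` by `n + 1`
    have hn' : ∀ x : ℕ → Dm l a, nestD (br ωa γ ε ξ αf) (n + 1) x = 0 := by
      intro x
      show br ωa γ ε ξ αf (x (n + 1)) (nestD (br ωa γ ε ξ αf) n x) = 0
      rw [hn x, hbr0]
    constructor
    · -- `a` is nilpotent
      have had : ∀ x y : a, (LieAlgebra.ad ℝ a : a →ₗ[ℝ] (a →ₗ[ℝ] a)) x y = ⁅x, y⁆ :=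
        fun x y => rfl
      have key : ∀ (A : ℕ → a) (B : a),
          compXi (LieAlgebra.ad ℝ a : a →ₗ[ℝ] (a →ₗ[ℝ] a)) (n + 1) A B = 0 := by
        intro A B
        set x : ℕ → Dm l a :=
          cns ((0 : Module.Dual ℝ l), B, (0 : l)) (fun t => (0, A t, 0)) with hx
        have h1 := hn' x
        have h2 := claimB x n
        rw [h1] at h2
        have h2' : Dch ξ (fun t => (x (t + 2)).2.1) (fun t => (x (t + 2)).2.2) n
            ((nestD (br ωa γ ε ξ αf) 1 x).2.1) = 0 := by
          have := congrArg Prod.fst h2.symm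
          simpa using this
        have hB1 : (nestD (br ωa γ ε ξ αf) 1 x).2.1 = ⁅A 0, B⁆ := by
          show ⁅A 0, B⁆ + ξ 0 B - ξ 0 (A 0) + αf 0 0 = ⁅A 0, B⁆
          simp [hα0]
        rw [hB1] at h2'
        have hD : Dch ξ (fun t => (x (t + 2)).2.1) (fun t => (x (t + 2)).2.2) n ⁅A 0, B⁆
            = Dch ξ (fun t => A (t + 1)) (fun _ => (0 : l)) n ⁅A 0, B⁆ := rfl
        rw [hD, Dch_zeroL ξ (LieAlgebra.ad ℝ a) had] at h2'
        have : compXi (LieAlgebra.ad ℝ a : a →ₗ[ℝ] (a →ₗ[ℝ] a)) (n + 1)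
            (cns (A 0) (fun t => A (t + 1))) B = 0 := by
          rw [compXi_cns]
          rw [had]
          exact h2'
        have hA : cns (A 0) (fun t => A (t + 1)) = A := by
          funext t
          cases t with
          | zero => rfl
          | succ s => rfl
        rwa [hA] at this
      exact (LieModule.isNilpotent_iff ℝ a a).mpr ⟨n + 1, lcs_eq_bot_of_ad_comp _ had (n + 1) key⟩
    · -- compositions of `ξ` of length `n + 1` vanish
      refine ⟨n + 1, fun L A => ?_⟩
      set x : ℕ → Dm l a :=
        cns ((0 : Module.Dual ℝ l), A, (0 : l)) (fun t => (0, 0, L t)) with hx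
      have h1 := hn' x
      have h2 := claimB x n
      rw [h1] at h2
      have h2' : Dch ξ (fun t => (x (t + 2)).2.1) (fun t => (x (t + 2)).2.2) n
          ((nestD (br ωa γ ε ξ αf) 1 x).2.1) = 0 := by
        have := congrArg Prod.fst h2.symm
        simpa using this
      have hB1 : (nestD (br ωa γ ε ξ αf) 1 x).2.1 = ξ (L 0) A := by
        show ⁅(0 : a), A⁆ + ξ (L 0) A - ξ 0 0 + αf (L 0) 0 = ξ (L 0) A
        simp [hα0]
      rw [hB1] at h2'
      have hD : Dch ξ (fun t => (x (t + 2)).2.1) (fun t => (x (t + 2)).2.2) n (ξ (L 0) A)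
          = Dch ξ (fun _ => (0 : a)) (fun t => L (t + 1)) n (ξ (L 0) A) := rfl
      rw [hD, Dch_zeroA] at h2'
      have : compXi ξ (n + 1) (cns (L 0) (fun t => L (t + 1))) A = 0 := by
        rw [compXi_cns]
        exact h2'
      have hL : cns (L 0) (fun t => L (t + 1)) = L := by
        funext t
        cases t with
        | zero => rfl
        | succ s => rfl
      rwa [hL] at this
  · -- backward direction
    rintro ⟨hnil, n, hn⟩
    obtain ⟨m, hm⟩ := (LieModule.isNilpotent_iff ℝ a a).mp hnil
    refine ⟨m * n + 2, fun x => ?_⟩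
    have h2 := claimB x (m * n)
    rw [Dch_eq_zero ξ hder m n hm hn] at h2
    show br ωa γ ε ξ αf (x (m * n + 2)) (nestD (br ωa γ ε ξ αf) (m * n + 1) x) = 0
    have h3 : (nestD (br ωa γ ε ξ αf) (m * n + 1) x).2.2 = 0 := by rw [h2]
    have h1 : (nestD (br ωa γ ε ξ αf) (m * n + 1) x).2.1 = 0 := by rw [h2]
    rw [hbr _ _ h3, h1]
    simp [betaF_zero_right, Prod.ext_iff]


end Stmt16
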